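/- For every integer n ≥ 1 and all z > 0, the polygamma function |ψ_n| is log-convex: |ψ_n((a+b)/2)| ≤ √(|ψ_n(a)|·|ψ_n(b)|) ≤ (|ψ_n(a)| + |ψ_n(b)|)/2 for all a, b > 0. -/

import Mathlib

open MeasureTheory

/-- The polygamma function of order `n`: the `(n+1)`-st derivative of `log ∘ Γ`. -/
noncomputable def polygamma (n : ℕ) (z : ℝ) : ℝ :=
  iteratedDeriv (n + 1) (fun x => Real.log (Real.Gamma x)) z

/-! For `n ≥ 1` and `x > 0` one has `|ψ_n x| = n! ∑ₖ (x + k)⁻⁽ⁿ⁺¹⁾`. This comes from the digamma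
function: `ψ_0` is monotone on `(0, ∞)` (convexity of `log Γ`) and `ψ_0 (x + 1) = ψ_0 x + 1 / x`,
which together force `ψ_0 x = ψ_0 1 + ∑ₖ (1 / (k + 1) - 1 / (x + k))`; differentiating term by term
gives the higher polygamma functions.

Each term `(x + k)⁻ᵐ` is log-convex, because `(a + k) (b + k) ≤ ((a + b) / 2 + k) ^ 2`, and the
Cauchy–Schwarz inequality for series carries this over to the sum (the discrete form of the
Cauchy–Schwarz argument on the integral representation). The second inequality is AM–GM. -/

open Real Filter Topology Set
open scoped Nat

lemma sqrt_mul_le_add_div_two {x y : ℝ} (hx : 0 ≤ x) (hy : 0 ≤ y) : √(x * y) ≤ (x + y) / 2 := by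
  calc √(x * y) ≤ √(((x + y) / 2) ^ 2) := Real.sqrt_le_sqrt (by nlinarith [sq_nonneg (x - y)])
    _ = (x + y) / 2 := Real.sqrt_sq (by positivity)

lemma summable_sqrt_mul_sqrt {ι : Type*} {f g : ι → ℝ} (hf : ∀ i, 0 ≤ f i) (hg : ∀ i, 0 ≤ g i)
    (hfs : Summable f) (hgs : Summable g) : Summable fun i => √(f i) * √(g i) := by
  refine .of_nonneg_of_le (fun i => by positivity) (fun i => ?_) ((hfs.add hgs).div_const 2)
  rw [← Real.sqrt_mul (hf i)]
  exact sqrt_mul_le_add_div_two (hf i) (hg i)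

lemma tsum_sqrt_mul_sqrt_le {ι : Type*} {f g : ι → ℝ} (hf : ∀ i, 0 ≤ f i) (hg : ∀ i, 0 ≤ g i)
    (hfs : Summable f) (hgs : Summable g) :
    ∑' i, √(f i) * √(g i) ≤ √(∑' i, f i) * √(∑' i, g i) := by
  refine (summable_sqrt_mul_sqrt hf hg hfs hgs).tsum_le_of_sum_le fun s =>
    (Real.sum_sqrt_mul_sqrt_le s hf hg).trans ?_
  gcongr
  exacts [hfs.sum_le_tsum s fun i _ => hf i, hgs.sum_le_tsum s fun i _ => hg i]

noncomputable def hurwitzSeries (m : ℕ) (x : ℝ) : ℝ := ∑' k : ℕ, ((x + k) ^ m)⁻¹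

lemma summable_hurwitzSeries {m : ℕ} (hm : 2 ≤ m) (x : ℝ) :
    Summable fun k : ℕ => ((x + k) ^ m)⁻¹ := by
  refine summable_abs_iff.1 (((summable_one_div_nat_add_rpow x m).2
    (by exact_mod_cast hm)).congr fun k => ?_)
  rw [Real.rpow_natCast, one_div, abs_inv, abs_pow, add_comm]

lemma hurwitzSeries_nonneg (m : ℕ) {x : ℝ} (hx : 0 ≤ x) : 0 ≤ hurwitzSeries m x :=
  tsum_nonneg fun k => by positivity

lemma hasDerivAt_inv_add_pow (m k : ℕ) {y : ℝ} (hy : y + k ≠ 0) :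
    HasDerivAt (fun z : ℝ => ((z + k) ^ m)⁻¹) (-m * ((y + k) ^ (m + 1))⁻¹) y := by
  have h := (hasDerivAt_zpow (-(m : ℤ)) (y + k) (.inl hy)).comp_add_const y (k : ℝ)
  rw [show -(m : ℤ) - 1 = -((m + 1 : ℕ) : ℤ) by push_cast; ring] at h
  simpa only [zpow_neg, zpow_natCast, Int.cast_neg, Int.cast_natCast] using h

lemma inv_add_pow_le_of_le {c y : ℝ} (hc : 0 < c) (hcy : c ≤ y) (m k : ℕ) :
    ((y + k) ^ m)⁻¹ ≤ ((c + k) ^ m)⁻¹ := by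
  gcongr

lemma hasDerivAt_hurwitzSeries {m : ℕ} (hm : 2 ≤ m) {x : ℝ} (hx : 0 < x) :
    HasDerivAt (hurwitzSeries m) (-m * hurwitzSeries (m + 1) x) x := by
  have hx2 : 0 < x / 2 := by positivity
  rw [hurwitzSeries, ← tsum_mul_left]
  refine hasDerivAt_tsum_of_isPreconnected
    (g := fun (k : ℕ) (z : ℝ) => ((z + k) ^ m)⁻¹)
    (g' := fun (k : ℕ) (z : ℝ) => -m * ((z + k) ^ (m + 1))⁻¹)
    ((summable_hurwitzSeries (m := m + 1) (by omega) (x / 2)).mul_left (m : ℝ)) isOpen_Ioi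
    (convex_Ioi _).isPreconnected (fun k y hy => ?_) (fun k y hy => ?_) (half_lt_self hx)
    (summable_hurwitzSeries hm x) (half_lt_self hx)
  all_goals have hy0 : 0 < y := hx2.trans hy
  · exact hasDerivAt_inv_add_pow m k (by positivity)
  · rw [norm_mul, norm_neg, Real.norm_natCast, Real.norm_of_nonneg (by positivity)]
    exact mul_le_mul_of_nonneg_left (inv_add_pow_le_of_le hx2 hy.le _ k) (by positivity)

lemma inv_add_pow_midpoint_le {a b : ℝ} (ha : 0 < a) (hb : 0 < b) (m k : ℕ) :
    (((a + b) / 2 + k) ^ m)⁻¹ ≤ √(((a + k) ^ m)⁻¹) * √(((b + k) ^ m)⁻¹) :=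
  calc (((a + b) / 2 + k) ^ m)⁻¹ = √(((((a + b) / 2 + k) ^ 2) ^ m)⁻¹) := by
        rw [← pow_mul, mul_comm, pow_mul, ← inv_pow _ 2, Real.sqrt_sq (by positivity)]
    _ ≤ √((((a + k) * (b + k)) ^ m)⁻¹) := by
        gcongr
        nlinarith [sq_nonneg (a - b)]
    _ = √(((a + k) ^ m)⁻¹) * √(((b + k) ^ m)⁻¹) := by
        rw [mul_pow, mul_inv, Real.sqrt_mul (by positivity)]

lemma hurwitzSeries_midpoint_le_sqrt {m : ℕ} (hm : 2 ≤ m) {a b : ℝ} (ha : 0 < a) (hb : 0 < b) :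
    hurwitzSeries m ((a + b) / 2) ≤ √(hurwitzSeries m a * hurwitzSeries m b) := by
  have hfa (k : ℕ) : 0 ≤ ((a + k) ^ m)⁻¹ := by positivity
  have hfb (k : ℕ) : 0 ≤ ((b + k) ^ m)⁻¹ := by positivity
  rw [Real.sqrt_mul (hurwitzSeries_nonneg m ha.le)]
  calc hurwitzSeries m ((a + b) / 2) ≤ ∑' k : ℕ, √(((a + k) ^ m)⁻¹) * √(((b + k) ^ m)⁻¹) :=
        (summable_hurwitzSeries hm _).tsum_le_tsum (inv_add_pow_midpoint_le ha hb m)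
          (summable_sqrt_mul_sqrt hfa hfb (summable_hurwitzSeries hm a)
            (summable_hurwitzSeries hm b))
    _ ≤ √(hurwitzSeries m a) * √(hurwitzSeries m b) :=
        tsum_sqrt_mul_sqrt_le hfa hfb (summable_hurwitzSeries hm a) (summable_hurwitzSeries hm b)

noncomputable def digammaSeries (x : ℝ) : ℝ := ∑' k : ℕ, (((k : ℝ) + 1)⁻¹ - (x + k)⁻¹)

lemma hasDerivAt_digammaSeries_term (k : ℕ) {y : ℝ} (hy : y + k ≠ 0) :
    HasDerivAt (fun z : ℝ => ((k : ℝ) + 1)⁻¹ - (z + k)⁻¹) ((y + k) ^ 2)⁻¹ y := by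
  simpa using ((hasDerivAt_inv hy).comp_add_const y (k : ℝ)).const_sub (((k : ℝ) + 1)⁻¹)

lemma summable_digammaSeries {x : ℝ} (hx : 0 < x) :
    Summable fun k : ℕ => ((k : ℝ) + 1)⁻¹ - (x + k)⁻¹ := by
  -- The terms vanish at `1`, and their derivatives are bounded by a summable series.
  set c := min x 1 / 2
  have hc : 0 < c := by positivity
  have hcx : c < x := by simp only [c]; linarith [min_le_left x 1]
  have hc1 : c < 1 := by simp only [c]; linarith [min_le_right x 1]
  refine summable_of_summable_hasDerivAt_of_isPreconnected
    (g := fun (k : ℕ) (z : ℝ) => ((k : ℝ) + 1)⁻¹ - (z + k)⁻¹)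
    (g' := fun (k : ℕ) (z : ℝ) => ((z + k) ^ 2)⁻¹)
    (summable_hurwitzSeries le_rfl c) isOpen_Ioi (convex_Ioi c).isPreconnected
    (fun k y hy => ?_) (fun k y hy => ?_) hc1 (by simp [add_comm]) hcx
  all_goals have hy0 : 0 < y := hc.trans hy
  · exact hasDerivAt_digammaSeries_term k (by positivity)
  · rw [Real.norm_of_nonneg (by positivity)]
    exact inv_add_pow_le_of_le hc hy.le 2 k

lemma hasDerivAt_digammaSeries {x : ℝ} (hx : 0 < x) :
    HasDerivAt digammaSeries (hurwitzSeries 2 x) x := by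
  have hx2 : 0 < x / 2 := by positivity
  refine hasDerivAt_tsum_of_isPreconnected
    (g := fun (k : ℕ) (z : ℝ) => ((k : ℝ) + 1)⁻¹ - (z + k)⁻¹)
    (g' := fun (k : ℕ) (z : ℝ) => ((z + k) ^ 2)⁻¹)
    (summable_hurwitzSeries le_rfl (x / 2)) isOpen_Ioi (convex_Ioi _).isPreconnected
    (fun k y hy => ?_) (fun k y hy => ?_) (half_lt_self hx) (summable_digammaSeries hx)
    (half_lt_self hx)
  all_goals have hy0 : 0 < y := hx2.trans hy
  · exact hasDerivAt_digammaSeries_term k (by positivity)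
  · rw [Real.norm_of_nonneg (by positivity)]
    exact inv_add_pow_le_of_le hx2 hy.le 2 k

lemma add_natCast_eq_add_sum {f : ℝ → ℝ} (hrec : ∀ y, 0 < y → f (y + 1) = f y + y⁻¹) {y : ℝ}
    (hy : 0 < y) (N : ℕ) : f (y + N) = f y + ∑ k ∈ Finset.range N, (y + k)⁻¹ := by
  induction N with
  | zero => simp
  | succ N ih =>
    rw [Nat.cast_succ, ← add_assoc, hrec _ (by positivity), ih, Finset.sum_range_succ, add_assoc]

lemma tendsto_add_natCast_sub_one_add_natCast {f : ℝ → ℝ} (hmono : MonotoneOn f (Ioi 0))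
    (hrec : ∀ y, 0 < y → f (y + 1) = f y + y⁻¹) {x : ℝ} (hx : 0 < x) :
    Tendsto (fun N : ℕ => f (x + N) - f (1 + N)) atTop (𝓝 0) := by
  -- Both `x + N` and `1 + N` lie in `[N, N + m]`, across which `f` increases by at most `m / N`.
  set m : ℕ := ⌈x⌉₊ + 1
  have hxm : x ≤ m := by simp only [m]; push_cast; linarith [Nat.le_ceil x]
  refine squeeze_zero_norm' ?_ (tendsto_const_div_atTop_nhds_zero_nat (m : ℝ))
  filter_upwards [eventually_gt_atTop 0] with N hN
  have hN : (0 : ℝ) < N := by exact_mod_cast hN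
  have hmem (y : ℝ) (hy : 0 ≤ y) : (N : ℝ) + y ∈ Ioi 0 := by simp only [mem_Ioi]; positivity
  have hle {y : ℝ} (hy : 0 ≤ y) (hym : y ≤ m) : f N ≤ f (N + y) ∧ f (N + y) ≤ f (N + m) :=
    ⟨hmono hN (hmem y hy) (by linarith), hmono (hmem y hy) (hmem m m.cast_nonneg) (by linarith)⟩
  have hsum : ∑ k ∈ Finset.range m, ((N : ℝ) + k)⁻¹ ≤ m / N := by
    calc ∑ k ∈ Finset.range m, ((N : ℝ) + k)⁻¹ ≤ ∑ k ∈ Finset.range m, (N : ℝ)⁻¹ :=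
          Finset.sum_le_sum fun k _ => inv_anti₀ hN (by simp)
      _ = m / N := by simp [div_eq_mul_inv]
  obtain ⟨hx₁, hx₂⟩ := hle hx.le hxm
  obtain ⟨h1₁, h1₂⟩ := hle zero_le_one (by simp [m])
  rw [Real.norm_eq_abs, add_comm x, add_comm (1 : ℝ)]
  calc |f (N + x) - f (N + 1)| ≤ f (N + m) - f N := abs_sub_le_of_le_of_le hx₁ hx₂ h1₁ h1₂
    _ ≤ m / N := by rw [add_natCast_eq_add_sum hrec hN]; linarith

lemma eq_add_digammaSeries_of_monotoneOn {f : ℝ → ℝ} (hmono : MonotoneOn f (Ioi 0))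
    (hrec : ∀ y, 0 < y → f (y + 1) = f y + y⁻¹) {x : ℝ} (hx : 0 < x) :
    f x = f 1 + digammaSeries x := by
  have hpartial (N : ℕ) : ∑ k ∈ Finset.range N, (((k : ℝ) + 1)⁻¹ - (x + k)⁻¹) =
      (f x - f 1) - (f (x + N) - f (1 + N)) := by
    rw [Finset.sum_sub_distrib, add_natCast_eq_add_sum hrec hx, add_natCast_eq_add_sum hrec one_pos]
    simp only [add_comm (1 : ℝ)]
    ring
  have hlim : Tendsto (fun N : ℕ => ∑ k ∈ Finset.range N, (((k : ℝ) + 1)⁻¹ - (x + k)⁻¹)) atTop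
      (𝓝 (f x - f 1)) := by
    simpa [hpartial] using
      tendsto_const_nhds.sub (tendsto_add_natCast_sub_one_add_natCast hmono hrec hx)
  rw [digammaSeries, tendsto_nhds_unique (summable_digammaSeries hx).hasSum.tendsto_sum_nat hlim]
  ring

lemma polygamma_zero : polygamma 0 = deriv fun x => log (Gamma x) :=
  funext fun _ => by rw [polygamma, iteratedDeriv_one]

lemma polygamma_succ (n : ℕ) : polygamma (n + 1) = deriv (polygamma n) :=
  funext fun _ => by rw [polygamma, iteratedDeriv_succ]; rfl

lemma differentiableAt_log_Gamma {x : ℝ} (hx : 0 < x) :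
    DifferentiableAt ℝ (fun x => log (Gamma x)) x :=
  (differentiableAt_Gamma fun m => by linarith [m.cast_nonneg (α := ℝ)]).log
    (Gamma_pos_of_pos hx).ne'

lemma polygamma_zero_add_one {x : ℝ} (hx : 0 < x) :
    polygamma 0 (x + 1) = polygamma 0 x + x⁻¹ := by
  have hrec : (fun y => log (Gamma (y + 1))) =ᶠ[𝓝 x] fun y => log (Gamma y) + log y := by
    filter_upwards [eventually_gt_nhds hx] with y hy
    rw [Gamma_add_one hy.ne', log_mul hy.ne' (Gamma_pos_of_pos hy).ne', add_comm]
  rw [polygamma_zero, ← deriv_comp_add_const, hrec.deriv_eq,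
    deriv_fun_add (differentiableAt_log_Gamma hx) (differentiableAt_log hx.ne'), deriv_log]

lemma monotoneOn_polygamma_zero : MonotoneOn (polygamma 0) (Ioi 0) := by
  rw [polygamma_zero]
  exact convexOn_log_Gamma.monotoneOn_deriv fun _ hx => differentiableAt_log_Gamma hx

lemma hasDerivAt_polygamma_zero {x : ℝ} (hx : 0 < x) :
    HasDerivAt (polygamma 0) (hurwitzSeries 2 x) x := by
  refine ((hasDerivAt_digammaSeries hx).const_add (polygamma 0 1)).congr_of_eventuallyEq ?_
  filter_upwards [Ioi_mem_nhds hx] with y hy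
  exact eq_add_digammaSeries_of_monotoneOn monotoneOn_polygamma_zero
    (fun _ => polygamma_zero_add_one) hy

lemma polygamma_succ_eq {x : ℝ} (hx : 0 < x) (j : ℕ) :
    polygamma (j + 1) x = (-1) ^ j * (j + 1)! * hurwitzSeries (j + 2) x := by
  induction j generalizing x with
  | zero => simpa [polygamma_succ] using (hasDerivAt_polygamma_zero hx).deriv
  | succ j ih =>
    have hev : polygamma (j + 1) =ᶠ[𝓝 x]
        fun y => (-1) ^ j * (j + 1)! * hurwitzSeries (j + 2) y := by
      filter_upwards [Ioi_mem_nhds hx] with y hy using ih hy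
    rw [polygamma_succ, hev.deriv_eq,
      ((hasDerivAt_hurwitzSeries (by omega) hx).const_mul _).deriv, Nat.factorial_succ (j + 1)]
    push_cast
    ring

lemma abs_polygamma {n : ℕ} (hn : 1 ≤ n) {x : ℝ} (hx : 0 < x) :
    |polygamma n x| = n ! * hurwitzSeries (n + 1) x := by
  obtain ⟨j, rfl⟩ := Nat.exists_eq_add_of_le' hn
  rw [polygamma_succ_eq hx, abs_mul, abs_mul, abs_pow, abs_neg, abs_one, one_pow, one_mul,
    Nat.abs_cast, abs_of_nonneg (hurwitzSeries_nonneg _ hx.le)]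

theorem polygamma_log_convex (n : ℕ) (hn : 1 ≤ n) (a b : ℝ) (ha : 0 < a) (hb : 0 < b) :
    |polygamma n ((a + b) / 2)| ≤ Real.sqrt (|polygamma n a| * |polygamma n b|) ∧
    Real.sqrt (|polygamma n a| * |polygamma n b|) ≤ (|polygamma n a| + |polygamma n b|) / 2 := by
  refine ⟨?_, sqrt_mul_le_add_div_two (abs_nonneg _) (abs_nonneg _)⟩
  rw [abs_polygamma hn ha, abs_polygamma hn hb, abs_polygamma hn (by positivity),
    mul_mul_mul_comm, Real.sqrt_mul (by positivity), Real.sqrt_mul_self (by positivity)]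
  gcongr
  exact hurwitzSeries_midpoint_le_sqrt (by omega) ha hb
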